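/- For Fibonacci quaternions and n ≥ 1, the Cassini identity Q_{n−1} Q_{n+1} − Q_n² = (−1)ⁿ (2 Q_1 − 3k) holds. -/

import Mathlib

/-!
For any sequence in a ring (commutative or not) obeying x_{n+2} = x_n + x_{n+1}, expanding by the
recurrence shows that the Cassini expression x_n x_{n+2} - x_{n+1}^2 changes sign at each step, so
it equals (-1)^n times its initial value. For the Fibonacci quaternions that initial value,
Q_0 Q_2 - Q_1^2, is computed directly to be -(2 Q_1 - 3k).
-/

open Quaternion TrivSqZeroExt DualNumber

noncomputable section

/-- The n-th Fibonacci quaternion Q_n = F_n + i F_{n+1} + j F_{n+2} + k F_{n+3}. -/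
def fibQ (n : ℕ) : ℍ[ℝ] :=
  ⟨Nat.fib n, Nat.fib (n+1), Nat.fib (n+2), Nat.fib (n+3)⟩

/-- Lucas numbers: L_0 = 2, L_1 = 1. -/
def lucas : ℕ → ℕ
  | 0 => 2
  | 1 => 1
  | n + 2 => lucas n + lucas (n+1)

/-- The n-th Lucas quaternion K_n = L_n + i L_{n+1} + j L_{n+2} + k L_{n+3}. -/
def lucasQ (n : ℕ) : ℍ[ℝ] :=
  ⟨lucas n, lucas (n+1), lucas (n+2), lucas (n+3)⟩

/-- The n-th dual Fibonacci quaternion Q̃_n = Q_n + ε Q_{n+1}. -/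
def dQ (n : ℕ) : DualNumber ℍ[ℝ] := inl (fibQ n) + inl (fibQ (n+1)) * ε

/-- The n-th dual Lucas quaternion K̃_n = K_n + ε K_{n+1}. -/
def dK (n : ℕ) : DualNumber ℍ[ℝ] := inl (lucasQ n) + inl (lucasQ (n+1)) * ε

/-- Conjugate of the dual Fibonacci quaternion (componentwise quaternion conjugation). -/
def dQconj (n : ℕ) : DualNumber ℍ[ℝ] := inl (star (fibQ n)) + inl (star (fibQ (n+1))) * ε

/-- The dual Fibonacci number F̃_n = F_n + ε F_{n+1} as a scalar dual quaternion. -/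
def dF (n : ℕ) : DualNumber ℍ[ℝ] :=
  inl ((Nat.fib n : ℝ) : ℍ[ℝ]) + inl ((Nat.fib (n+1) : ℝ) : ℍ[ℝ]) * ε

/-- The dual Lucas number L̃_n = L_n + ε L_{n+1} as a scalar dual quaternion. -/
def dL (n : ℕ) : DualNumber ℍ[ℝ] :=
  inl ((lucas n : ℝ) : ℍ[ℝ]) + inl ((lucas (n+1) : ℝ) : ℍ[ℝ]) * ε

def qi : ℍ[ℝ] := ⟨0,1,0,0⟩
def qj : ℍ[ℝ] := ⟨0,0,1,0⟩
def qk : ℍ[ℝ] := ⟨0,0,0,1⟩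

@[simp] theorem re_fibQ (n : ℕ) : (fibQ n).re = Nat.fib n := rfl
@[simp] theorem imI_fibQ (n : ℕ) : (fibQ n).imI = Nat.fib (n + 1) := rfl
@[simp] theorem imJ_fibQ (n : ℕ) : (fibQ n).imJ = Nat.fib (n + 2) := rfl
@[simp] theorem imK_fibQ (n : ℕ) : (fibQ n).imK = Nat.fib (n + 3) := rfl

theorem fibQ_add_two (n : ℕ) : fibQ (n + 2) = fibQ n + fibQ (n + 1) := by
  ext <;> simp [Nat.fib_add_two]

section FibonacciRecurrence

variable {R : Type*} [Ring R] {x : ℕ → R}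

theorem cassini_succ_eq_neg (hx : ∀ n, x (n + 2) = x n + x (n + 1)) (n : ℕ) :
    x (n + 1) * x (n + 3) - x (n + 2) ^ 2 = -(x n * x (n + 2) - x (n + 1) ^ 2) := by
  rw [hx (n + 1), hx n]
  noncomm_ring

theorem cassini_eq_neg_one_pow_zsmul (hx : ∀ n, x (n + 2) = x n + x (n + 1)) (n : ℕ) :
    x n * x (n + 2) - x (n + 1) ^ 2 = (-1 : ℤ) ^ n • (x 0 * x 2 - x 1 ^ 2) := by
  induction n with
  | zero => simp
  | succ n ih => rw [cassini_succ_eq_neg hx, ih, pow_succ (-1 : ℤ), mul_neg_one, neg_smul]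

end FibonacciRecurrence

theorem fibQ_cassini_zero : fibQ 0 * fibQ 2 - fibQ 1 ^ 2 = -(2 * fibQ 1 - 3 * qk) := by
  -- `simp` cannot read off the components of the numerals `2 3 : ℍ[ℝ]`, but it can for real casts.
  rw [show (2 : ℍ[ℝ]) = ((2 : ℝ) : ℍ[ℝ]) by norm_cast, show (3 : ℍ[ℝ]) = ((3 : ℝ) : ℍ[ℝ]) by norm_cast]
  simp [Quaternion.ext_iff, pow_two, Nat.fib_add_two,
    Quaternion.re_mul, Quaternion.imI_mul, Quaternion.imJ_mul, Quaternion.imK_mul]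
  norm_num [qk]

theorem fib_quaternion_cassini (n : ℕ) (hn : 1 ≤ n) :
    fibQ (n-1) * fibQ (n+1) - fibQ n ^ 2 =
      ((-1 : ℝ) ^ n) • (2 * fibQ 1 - 3 * qk) := by
  obtain ⟨m, rfl⟩ := Nat.exists_add_one_eq.mpr hn
  rw [Nat.add_sub_cancel, cassini_eq_neg_one_pow_zsmul fibQ_add_two, fibQ_cassini_zero,
    ← Int.cast_smul_eq_zsmul ℝ, pow_succ]
  push_cast
  rw [mul_neg_one, neg_smul, smul_neg]
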